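/- arXiv:1810.04004 — 5 statements merged into one kernel-verified Lean document; each statement's English description precedes it below -/
import Mathlib

section
/- For integers 3 ≤ n ≤ m with binom(n,2) > m and m ≥ 3 + binom(n-3,2), the strong geodetic number of the complete bipartite graph K_{n,m} equals n. -/
open SimpleGraph

/-- A set `S` of vertices is a strong geodetic set of `G` if one can fix, for each
pair of vertices of `S`, a single geodesic (shortest path) between them, so that
every vertex of the graph lies on one of the chosen geodesics. -/
def IsStrongGeodeticSet {V : Type*} (G : SimpleGraph V) (S : Set V) : Prop :=
  ∃ γ : ∀ u ∈ S, ∀ v ∈ S, G.Walk u v,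
    (∀ u (hu : u ∈ S) v (hv : v ∈ S), (γ u hu v hv).length = G.dist u v) ∧
    (∀ u (hu : u ∈ S) v (hv : v ∈ S), γ u hu v hv = (γ v hv u hu).reverse) ∧
    (∀ x : V, ∃ u, ∃ hu : u ∈ S, ∃ v, ∃ hv : v ∈ S, x ∈ (γ u hu v hv).support)

/-- The strong geodetic number of a finite graph: the minimum cardinality of a
strong geodetic set. -/
noncomputable def strongGeodeticNumber {V : Type*} [Fintype V] (G : SimpleGraph V) : ℕ :=
  sInf {k | ∃ S : Finset V, S.card = k ∧ IsStrongGeodeticSet G ↑S}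

/-!
Geodesics of `K_{n,m}` have length at most 2, so a vertex outside a strong geodetic set `S`
is the middle vertex of the chosen geodesic between two of its neighbours in `S`, and that
unordered pair determines it. Writing `a` and `b` for the number of vertices of `S` in the
parts of sizes `n` and `m`, this gives `n ≤ a + C(b,2)` and `m ≤ b + C(a,2)`, which under the
hypotheses on `n` and `m` force `|S| = a + b ≥ n`. Conversely, `m ≤ C(n,2)` lets us give the
vertices of the second part distinct pairs of the first one; routing the geodesic of each pair
through its vertex makes the first part a strong geodetic set.
-/

open Finset Sum

theorem Nat.add_choose_two (a c : ℕ) : (a + c).choose 2 = a.choose 2 + a * c + c.choose 2 := by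
  rw [Nat.add_choose_eq,
    Nat.sum_antidiagonal_eq_sum_range_succ (fun i j ↦ a.choose i * c.choose j),
    sum_range_succ, sum_range_succ, sum_range_one]
  simp only [Nat.reduceSub, Nat.sub_zero, Nat.choose_zero_right, Nat.choose_one_right]
  ring

theorem le_add_of_le_add_choose_two {n m a b : ℕ} (hnm : n ≤ m)
    (hm : 3 + (n - 3).choose 2 ≤ m) (ha : n ≤ a + b.choose 2) (hb : m ≤ b + a.choose 2) :
    n ≤ a + b := by
  by_contra! hlt
  have hb2 : 2 ≤ b := by
    by_contra! hb2
    rw [Nat.choose_eq_zero_of_lt hb2] at ha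
    omega
  -- with `n = a + 3 + c`: `3 + C(a,2) + a c + C(c,2) ≤ m ≤ b + C(a,2)` and `b ≤ c + 2`
  obtain ⟨c, rfl⟩ : ∃ c, n = a + 3 + c := ⟨n - a - 3, by omega⟩
  rw [show a + 3 + c - 3 = a + c by omega, Nat.add_choose_two] at hm
  rcases Nat.eq_zero_or_pos a with rfl | ha0
  · rw [Nat.choose_zero_succ] at hb
    omega
  · have : c ≤ a * c := Nat.le_mul_of_pos_left c ha0
    omega

variable {V : Type*} {G : SimpleGraph V}

theorem SimpleGraph.Walk.eq_snd_of_mem_support {u v x : V} {p : G.Walk u v} (hp : p.length ≤ 2)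
    (hx : x ∈ p.support) (hxu : x ≠ u) (hxv : x ≠ v) :
    p.length = 2 ∧ x = p.snd ∧ G.Adj u x ∧ G.Adj x v := by
  cases p with
  | nil => simp_all
  | cons _ q =>
    cases q with
    | nil => simp_all
    | cons _ r =>
      cases r with
      | nil => simp_all
      | cons _ _ => simp at hp

theorem IsStrongGeodeticSet.card_le_choose_two [DecidableEq V] {S T B : Finset V}
    (hS : IsStrongGeodeticSet G S) (hdist : ∀ u v, G.dist u v ≤ 2) (hTS : Disjoint T S)
    (hB : ∀ x ∈ T, ∀ u ∈ S, G.Adj u x → u ∈ B) : #T ≤ (#B).choose 2 := by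
  obtain ⟨γ, hlen, hsym, hcov⟩ := hS
  have hmid : ∀ x ∈ T, ∃ u hu v hv, u ≠ v ∧ G.Adj u x ∧ G.Adj v x ∧
      (γ u hu v hv).length = 2 ∧ x = (γ u hu v hv).snd := by
    intro x hx
    obtain ⟨u, hu, v, hv, hxuv⟩ := hcov x
    have hxS : x ∉ S := disjoint_left.1 hTS hx
    obtain ⟨h2, hsnd, hux, hxv⟩ := (γ u hu v hv).eq_snd_of_mem_support
      ((hlen ..).trans_le (hdist u v)) hxuv (by rintro rfl; exact hxS hu)
      (by rintro rfl; exact hxS hv)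
    refine ⟨u, hu, v, hv, ?_, hux, hxv.symm, h2, hsnd⟩
    rintro rfl
    simp [hlen] at h2
  choose! u hu v hv hne hux hvx hlen2 hx using hmid
  have hsnd : ∀ a ha b hb a' ha' b' hb', s(a, b) = s(a', b') → (γ a ha b hb).length = 2 →
      (γ a ha b hb).snd = (γ a' ha' b' hb').snd := by
    intro a ha b hb a' ha' b' hb' heq h2
    rcases Sym2.eq_iff.1 heq with ⟨rfl, rfl⟩ | ⟨rfl, rfl⟩
    · rfl
    · rw [hsym b ha' a hb', Walk.snd_reverse, Walk.penultimate, h2]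
  rw [← Sym2.card_image_offDiag]
  refine card_le_card_of_injOn (fun x ↦ s(u x, v x)) (fun x hxT ↦ ?_)
    (fun x hxT x' hx'T heq ↦ ?_)
  · exact mem_image_of_mem _ (mem_offDiag.2
      ⟨hB x hxT _ (hu x hxT) (hux x hxT), hB x hxT _ (hv x hxT) (hvx x hxT), hne x hxT⟩)
  · rw [hx x hxT, hx x' hx'T]
    exact hsnd _ _ _ _ _ _ _ _ heq (hlen2 x hxT)
theorem isStrongGeodeticSet_range {ι : Type*} {f : ι → V} (hf : f.Injective)
    (W : ∀ i j, G.Walk (f i) (f j)) (hlen : ∀ i j, (W i j).length = G.dist (f i) (f j))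
    (hsym : ∀ i j, W i j = (W j i).reverse) (hcov : ∀ x, ∃ i j, x ∈ (W i j).support) :
    IsStrongGeodeticSet G (Set.range f) := by
  choose idx hidx using fun u (hu : u ∈ Set.range f) ↦ hu
  refine ⟨fun u hu v hv ↦ (W (idx u hu) (idx v hv)).copy (hidx u hu) (hidx v hv),
    fun u hu v hv ↦ ?_, fun u hu v hv ↦ ?_, fun x ↦ ?_⟩
  · rw [Walk.length_copy, hlen, hidx, hidx]
  · dsimp only
    rw [hsym, Walk.reverse_copy]
  · obtain ⟨i, j, hx⟩ := hcov x
    refine ⟨f i, ⟨i, rfl⟩, f j, ⟨j, rfl⟩, ?_⟩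
    rwa [Walk.support_copy, hf (hidx (f i) ⟨i, rfl⟩), hf (hidx (f j) ⟨j, rfl⟩)]

theorem Sym2.exists_surjOn_not_isDiag {α β : Type*} [Fintype α] [Fintype β] [Nonempty β]
    (h : Fintype.card β ≤ (Fintype.card α).choose 2) :
    ∃ g : Sym2 α → β, Set.SurjOn g {p | ¬ p.IsDiag} Set.univ := by
  classical
  obtain ⟨e⟩ : Nonempty (β ↪ {p : Sym2 α // ¬ p.IsDiag}) :=
    Function.Embedding.nonempty_of_card_le (by rwa [Sym2.card_subtype_not_diag])
  have he : (fun y ↦ (e y : Sym2 α)).Injective := Subtype.val_injective.comp e.injective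
  exact ⟨Function.invFun fun y ↦ (e y : Sym2 α),
    fun y _ ↦ ⟨e y, (e y).2, Function.leftInverse_invFun he y⟩⟩

namespace SimpleGraph

variable {α β : Type*}

theorem dist_le_two_of_adj_of_adj {u w v : V}
    (huw : G.Adj u w) (hwv : G.Adj w v) : G.dist u v ≤ 2 :=
  dist_le (.cons huw hwv.toWalk)

theorem completeBipartiteGraph_dist_le_two [Nonempty α] [Nonempty β] (u v : α ⊕ β) :
    (completeBipartiteGraph α β).dist u v ≤ 2 := by
  rcases u with _ | _ <;> rcases v with _ | _
  · exact dist_le_two_of_adj_of_adj (w := .inr (Classical.arbitrary β)) (by simp) (by simp)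
  · exact (dist_le (Adj.toWalk (by simp))).trans (by simp)
  · exact (dist_le (Adj.toWalk (by simp))).trans (by simp)
  · exact dist_le_two_of_adj_of_adj (w := .inl (Classical.arbitrary α)) (by simp) (by simp)

theorem completeBipartiteGraph_dist_inl_inl [Nonempty β] {i j : α} (hij : i ≠ j) :
    (completeBipartiteGraph α β).dist (.inl i) (.inl j) = 2 := by
  have hw : (completeBipartiteGraph α β).Adj (.inl i) (.inr (Classical.arbitrary β)) := by simp
  have hw' : (completeBipartiteGraph α β).Adj (.inr (Classical.arbitrary β)) (.inl j) := by simp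
  refine le_antisymm (dist_le_two_of_adj_of_adj hw hw') ?_
  exact Reachable.one_lt_dist_of_ne_of_not_adj (hw.reachable.trans hw'.reachable)
    (by simpa) (by simp)

def completeBipartiteGraph.leftWalk [DecidableEq α] (g : Sym2 α → β) (i j : α) :
    (completeBipartiteGraph α β).Walk (.inl i) (.inl j) :=
  if h : i = j then h ▸ .nil else .cons (v := .inr (g s(i, j))) (by simp) (Adj.toWalk (by simp))

namespace completeBipartiteGraph

variable [DecidableEq α] (g : Sym2 α → β)

theorem length_leftWalk (i j : α) :
    (leftWalk g i j).length = (completeBipartiteGraph α β).dist (.inl i) (.inl j) := by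
  by_cases hij : i = j
  · subst hij; simp [leftWalk]
  · have : Nonempty β := ⟨g s(i, j)⟩
    simp [leftWalk, hij, completeBipartiteGraph_dist_inl_inl hij]

theorem leftWalk_comm (i j : α) : leftWalk g i j = (leftWalk g j i).reverse := by
  by_cases hij : i = j
  · subst hij; simp [leftWalk]
  · rw [leftWalk, leftWalk, dif_neg hij, dif_neg (Ne.symm hij), Sym2.eq_swap]
    rfl

theorem inr_mem_support_leftWalk {i j : α} (hij : i ≠ j) :
    .inr (g s(i, j)) ∈ (leftWalk g i j).support := by
  simp [leftWalk, hij]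

end completeBipartiteGraph

theorem isStrongGeodeticSet_completeBipartiteGraph_range_inl [Fintype α] [Fintype β] [Nonempty β]
    (h : Fintype.card β ≤ (Fintype.card α).choose 2) :
    IsStrongGeodeticSet (completeBipartiteGraph α β) (Set.range .inl) := by
  classical
  obtain ⟨g, hg⟩ := Sym2.exists_surjOn_not_isDiag h
  refine isStrongGeodeticSet_range Sum.inl_injective (completeBipartiteGraph.leftWalk g)
    (completeBipartiteGraph.length_leftWalk g) (completeBipartiteGraph.leftWalk_comm g) ?_
  rintro (i | y)
  · exact ⟨i, i, Walk.start_mem_support _⟩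
  · obtain ⟨p, hp, rfl⟩ := hg (Set.mem_univ y)
    induction p using Sym2.ind with
    | _ i j => exact ⟨i, j, completeBipartiteGraph.inr_mem_support_leftWalk g hp⟩

end SimpleGraph

theorem IsStrongGeodeticSet.card_le_card_toLeft_add_choose_two {α β : Type*} [Fintype α]
    [Nonempty α] [Nonempty β] {S : Finset (α ⊕ β)}
    (hS : IsStrongGeodeticSet (completeBipartiteGraph α β) S) :
    Fintype.card α ≤ #S.toLeft + (#S.toRight).choose 2 := by
  classical
  have := hS.card_le_choose_two completeBipartiteGraph_dist_le_two (T := S.toLeftᶜ.map .inl)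
    (B := S.toRight.map .inr) (disjoint_left.2 (by simp)) (by rintro _ _ (_ | _) <;> aesop)
  rw [card_map, card_map, card_compl] at this
  have := S.toLeft.card_le_univ
  omega

theorem IsStrongGeodeticSet.card_le_card_toRight_add_choose_two {α β : Type*} [Fintype β]
    [Nonempty α] [Nonempty β] {S : Finset (α ⊕ β)}
    (hS : IsStrongGeodeticSet (completeBipartiteGraph α β) S) :
    Fintype.card β ≤ #S.toRight + (#S.toLeft).choose 2 := by
  classical
  have := hS.card_le_choose_two completeBipartiteGraph_dist_le_two (T := S.toRightᶜ.map .inr)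
    (B := S.toLeft.map .inl) (disjoint_left.2 (by simp)) (by rintro _ _ (_ | _) <;> aesop)
  rw [card_map, card_map, card_compl] at this
  have := S.toRight.card_le_univ
  omega

theorem sg_completeBipartite_case3_general (n m : ℕ) (hnm : n ≤ m)
    (h1 : m < n.choose 2) (h2 : 3 + (n - 3).choose 2 ≤ m) :
    strongGeodeticNumber (completeBipartiteGraph (Fin n) (Fin m)) = n := by
  have hn : 0 < n := Nat.pos_of_ne_zero (by rintro rfl; simp at h1)
  have : Nonempty (Fin n) := ⟨⟨0, hn⟩⟩
  have : Nonempty (Fin m) := ⟨⟨0, hn.trans_le hnm⟩⟩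
  refine IsLeast.csInf_eq ⟨⟨univ.map .inl, by simp, ?_⟩, ?_⟩
  · simpa using isStrongGeodeticSet_completeBipartiteGraph_range_inl (by simpa using h1.le)
  · rintro _ ⟨S, rfl, hS⟩
    have ha := hS.card_le_card_toLeft_add_choose_two
    have hb := hS.card_le_card_toRight_add_choose_two
    rw [Fintype.card_fin] at ha hb
    rw [← card_toLeft_add_card_toRight]
    exact le_add_of_le_add_choose_two hnm h2 ha hb

/-- Theorem 2.4, case 3: if `3 ≤ n ≤ m`, `binom(n,2) > m` and `m ≥ 3 + binom(n-3, 2)`,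
then `sg(K_{n,m}) = n`. -/
theorem sg_completeBipartite_case3 (n m : ℕ) (h3 : 3 ≤ n) (hnm : n ≤ m)
    (h1 : m < n.choose 2) (h2 : 3 + (n - 3).choose 2 ≤ m) :
    strongGeodeticNumber (completeBipartiteGraph (Fin n) (Fin m)) = n :=
  sg_completeBipartite_case3_general n m hnm h1 h2
end

section
/- For integers 3 ≤ n ≤ m, the function F(k) = k + f(k) is (not necessarily strictly) increasing for integers 0 ≤ k ≤ n-1; moreover F(n-1) = n + 1, F(n) = n, and |F(k+1) - F(k)| ≤ 1 for all integers 0 ≤ k ≤ n-1. -/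
open SimpleGraph

/-- `fFun n p = min {q : binom(q,2) ≥ n - p}`. -/
noncomputable def fFun (n : ℕ) (p : ℕ) : ℕ := sInf {q : ℕ | n - p ≤ q.choose 2}

/-- `gFun m p = m - binom(p,2)` (as an integer). -/
def gFun (m : ℕ) (p : ℕ) : ℤ := (m : ℤ) - (p.choose 2 : ℤ)

/- Since `q ↦ q.choose 2` is monotone, `fFun n p ≤ q ↔ n - p ≤ q.choose 2`, and everything follows
from this characterisation. `fFun n` is antitone, so `F(k + 1) - F(k) ≤ 1`. Since
`(q + 1).choose 2 = q + q.choose 2`, lowering `p` by one raises `fFun n p` by at most one as long as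
`fFun n (p + 1) ≥ 1`, i.e. `p + 1 < n`; so `F` does not decrease up to `n - 1`, and the only drop is
from `F(n - 1) = (n - 1) + 2` to `F(n) = n + 0`. -/

theorem succ_choose_two (q : ℕ) : (q + 1).choose 2 = q + q.choose 2 := by
  rw [Nat.choose_succ_succ', Nat.choose_one_right]

theorem fFun_spec (n p : ℕ) : n - p ≤ (fFun n p).choose 2 :=
  Nat.sInf_mem (s := {q : ℕ | n - p ≤ q.choose 2})
    ⟨n - p + 1, by rw [Set.mem_ofPred, succ_choose_two]; omega⟩

theorem fFun_le_iff {n p q : ℕ} : fFun n p ≤ q ↔ n - p ≤ q.choose 2 :=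
  ⟨fun h => (fFun_spec n p).trans (Nat.choose_le_choose 2 h), fun h => Nat.sInf_le h⟩

theorem fFun_eq_zero_iff {n p : ℕ} : fFun n p = 0 ↔ n ≤ p := by
  rw [← Nat.le_zero, fFun_le_iff, Nat.choose_zero_succ, Nat.le_zero, Nat.sub_eq_zero_iff_le]

theorem fFun_self (n : ℕ) : fFun n n = 0 :=
  fFun_eq_zero_iff.2 le_rfl

theorem fFun_sub_one {n : ℕ} (hn : 0 < n) : fFun n (n - 1) = 2 := by
  have hsub : n - (n - 1) = 1 := by omega
  refine le_antisymm (fFun_le_iff.2 (by simp [hsub])) (not_lt.1 fun h => ?_)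
  have := fFun_le_iff.1 (Nat.lt_succ_iff.1 h)
  simp [hsub] at this

theorem fFun_antitone (n : ℕ) : Antitone (fFun n) := fun _ _ h =>
  fFun_le_iff.2 ((Nat.sub_le_sub_left h n).trans (fFun_spec n _))

theorem fFun_le_fFun_succ_add_one {n p : ℕ} (h : p + 1 < n) : fFun n p ≤ fFun n (p + 1) + 1 := by
  have hspec := fFun_spec n (p + 1)
  have hpos : fFun n (p + 1) ≠ 0 := fun h0 => by rw [fFun_eq_zero_iff] at h0; omega
  rw [fFun_le_iff, succ_choose_two]
  omega

theorem monotoneOn_add_fFun (n : ℕ) : MonotoneOn (fun k => k + fFun n k) (Set.Iic (n - 1)) := by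
  refine monotoneOn_of_le_succ Set.ordConnected_Iic fun k _ _ hk => ?_
  rw [Order.succ_eq_add_one, Set.mem_Iic] at hk
  have := fFun_le_fFun_succ_add_one (show k + 1 < n by omega)
  simp only [Order.succ_eq_add_one]
  omega

theorem F_monotone_general (n : ℕ) (h3 : 3 ≤ n) :
    (∀ k l : ℕ, k ≤ l → l ≤ n - 1 →
      (k : ℤ) + (fFun n k : ℤ) ≤ (l : ℤ) + (fFun n l : ℤ)) ∧
    ((n - 1 : ℕ) : ℤ) + (fFun n (n - 1) : ℤ) = (n : ℤ) + 1 ∧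
    (n : ℤ) + (fFun n n : ℤ) = (n : ℤ) ∧
    (∀ k : ℕ, k ≤ n - 1 →
      |(((k + 1 : ℕ) : ℤ) + (fFun n (k + 1) : ℤ)) - ((k : ℤ) + (fFun n k : ℤ))| ≤ 1) := by
  have hmono : ∀ k l : ℕ, k ≤ l → l ≤ n - 1 → k + fFun n k ≤ l + fFun n l := fun k l hkl hl =>
    monotoneOn_add_fFun n (Set.mem_Iic.2 (hkl.trans hl)) (Set.mem_Iic.2 hl) hkl
  have hpred := fFun_sub_one (show 0 < n by omega)
  refine ⟨fun k l hkl hl => by exact_mod_cast hmono k l hkl hl, by rw [hpred]; omega,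
    by rw [fFun_self]; omega, fun k hk => abs_le.2 ⟨?_, ?_⟩⟩
  · rcases (show k + 1 ≤ n - 1 ∨ k = n - 1 by omega) with hk | rfl
    · have := hmono k (k + 1) (Nat.le_add_right k 1) hk
      omega
    · rw [Nat.sub_add_cancel (by omega), fFun_self, hpred]
      omega
  · have := fFun_antitone n (Nat.le_add_right k 1)
    omega

/-- Lemma 2.6: for `3 ≤ n ≤ m`, `F(k) = k + f(k)` is increasing for `0 ≤ k ≤ n-1`;
moreover `F(n-1) = n + 1`, `F(n) = n`, and `|F(k+1) - F(k)| ≤ 1` for `0 ≤ k ≤ n-1`. -/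
theorem F_monotone (n m : ℕ) (h3 : 3 ≤ n) (hnm : n ≤ m) :
    (∀ k l : ℕ, k ≤ l → l ≤ n - 1 →
      (k : ℤ) + (fFun n k : ℤ) ≤ (l : ℤ) + (fFun n l : ℤ)) ∧
    ((n - 1 : ℕ) : ℤ) + (fFun n (n - 1) : ℤ) = (n : ℤ) + 1 ∧
    (n : ℤ) + (fFun n n : ℤ) = (n : ℤ) ∧
    (∀ k : ℕ, k ≤ n - 1 →
      |(((k + 1 : ℕ) : ℤ) + (fFun n (k + 1) : ℤ)) - ((k : ℤ) + (fFun n k : ℤ))| ≤ 1) :=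
  F_monotone_general n h3
end

section
/- Let n, m be integers with 7 ≤ n ≤ m and m ≤ 3 + binom(n-3,2), and let x* ∈ [3, n-3] be a real number with f̃(x*) = g̃(x*). Then G(⌈x*⌉ - 1) ≥ F(⌈x*⌉ - 1). -/
/-!
Write `p = ⌈x*⌉ - 1`, so that `p < x*`. On `[1, n - 3]` the difference `g̃ - f̃` is
antitone: `g̃` has slope `-(x - 1/2) ≤ -1/2` there, while `f̃` has slope
`-2/√(1 + 8(n - x)) ≥ -2/5`. Hence `f̃(p) ≤ g̃(p) = g(p)`, and since `q = g(p)` is an integer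
with `q ≥ f̃(p)`, i.e. `binom(q,2) ≥ n - p`, the minimum `f(p)` is at most `g(p)`.
-/

open SimpleGraph

/-- The continuous extension `f̃(x) = (1 + √(1 + 8(n - x)))/2`. -/
noncomputable def ftilde (n : ℕ) (x : ℝ) : ℝ := (1 + Real.sqrt (1 + 8 * ((n : ℝ) - x))) / 2

/-- The continuous extension `g̃(x) = m - x(x-1)/2`. -/
noncomputable def gtilde (m : ℕ) (x : ℝ) : ℝ := (m : ℝ) - x * (x - 1) / 2

theorem sub_le_of_ftilde_le {n : ℕ} {x y : ℝ} (h : ftilde n x ≤ y) :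
    n - x ≤ y * (y - 1) / 2 := by
  have hsqrt : √(1 + 8 * (n - x)) ≤ 2 * y - 1 := by unfold ftilde at h; linarith
  obtain ⟨-, hsq⟩ := Real.sqrt_le_iff.mp hsqrt
  nlinarith

theorem ftilde_pos (n : ℕ) (x : ℝ) : 0 < ftilde n x := by
  unfold ftilde; positivity

theorem fFun_le_of_ftilde_le {n p : ℕ} {q : ℤ} (h : ftilde n p ≤ q) : (fFun n p : ℤ) ≤ q := by
  lift q to ℕ using by exact_mod_cast (ftilde_pos n p).le.trans h
  have hchoose : n - p ≤ q.choose 2 := by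
    rw [Nat.sub_le_iff_le_add, ← Nat.cast_le (α := ℝ)]
    push_cast [Nat.cast_choose_two]
    linarith [sub_le_of_ftilde_le (by exact_mod_cast h : ftilde n p ≤ (q : ℝ))]
  exact_mod_cast (Nat.sInf_le hchoose : fFun n p ≤ q)

theorem gtilde_natCast (m p : ℕ) : gtilde m p = gFun m p := by
  simp only [gtilde, gFun, Int.cast_sub, Int.cast_natCast, Nat.cast_choose_two]

theorem antitoneOn_gtilde_sub_ftilde (n m : ℕ) :
    AntitoneOn (fun x => gtilde m x - ftilde n x) (Set.Icc 1 ((n : ℝ) - 3)) := by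
  rintro p ⟨hp1, hpn⟩ x ⟨hx1, hxn⟩ hpx
  simp only [gtilde, ftilde]
  set a := √(1 + 8 * (n - p))
  set b := √(1 + 8 * (n - x))
  have ha : a ^ 2 = 1 + 8 * (n - p) := Real.sq_sqrt (by linarith)
  have hb : b ^ 2 = 1 + 8 * (n - x) := Real.sq_sqrt (by linarith)
  have ha5 : 5 ≤ a := Real.le_sqrt_of_sq_le (by linarith)
  have hb5 : 5 ≤ b := Real.le_sqrt_of_sq_le (by linarith)
  -- `(a - b)(a + b) = 8(x - p)` with `a + b ≥ 10`, against `(x - p)(x + p - 1) ≥ x - p`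
  nlinarith [mul_nonneg (sub_nonneg.mpr hpx) (by linarith : (0 : ℝ) ≤ x + p - 2)]

theorem toNat_ceil_sub_one_mem_Ico {x : ℝ} (hx : 1 < x) :
    (((⌈x⌉ - 1).toNat : ℕ) : ℝ) ∈ Set.Ico 1 x := by
  have hceil : 2 ≤ ⌈x⌉ := Int.le_ceil_iff.mpr (by norm_num; linarith)
  have hcast : (((⌈x⌉ - 1).toNat : ℕ) : ℝ) = (⌈x⌉ : ℝ) - 1 := by
    rw [← Int.cast_natCast, Int.toNat_of_nonneg (by omega)]; push_cast; ring
  rw [hcast]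
  constructor
  · have : (2 : ℝ) ≤ ⌈x⌉ := by exact_mod_cast hceil
    linarith
  · linarith [Int.ceil_lt_add_one x]

theorem G_ge_F_at_ceil_sub_one_general (n m : ℕ)
    (x : ℝ) (hx : x ∈ Set.Icc (3 : ℝ) ((n : ℝ) - 3))
    (hroot : ftilde n x = gtilde m x) :
    ((⌈x⌉ : ℤ) - 1) + (fFun n ((⌈x⌉ : ℤ) - 1).toNat : ℤ) ≤
      ((⌈x⌉ : ℤ) - 1) + gFun m ((⌈x⌉ : ℤ) - 1).toNat := by
  set p := ((⌈x⌉ : ℤ) - 1).toNat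
  obtain ⟨hp1, hpx⟩ := toNat_ceil_sub_one_mem_Ico (by linarith [hx.1] : (1 : ℝ) < x)
  have hx1 : x ∈ Set.Icc 1 ((n : ℝ) - 3) := ⟨by linarith [hx.1], hx.2⟩
  have hcompare := antitoneOn_gtilde_sub_ftilde n m ⟨hp1, hpx.le.trans hx.2⟩ hx1 hpx.le
  have hfg : ftilde n p ≤ gFun m p := by
    rw [← gtilde_natCast]; simp only at hcompare; linarith
  exact add_le_add_right (fFun_le_of_ftilde_le hfg) _

/-- Lemma 2.8 (ii): if `7 ≤ n ≤ m`, `m ≤ 3 + binom(n-3,2)` and `x* ∈ [3, n-3]` is an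
intersection point of `f̃` and `g̃`, then `G(⌈x*⌉ - 1) ≥ F(⌈x*⌉ - 1)`. -/
theorem G_ge_F_at_ceil_sub_one (n m : ℕ) (h7 : 7 ≤ n) (hnm : n ≤ m)
    (hm : m ≤ 3 + (n - 3).choose 2)
    (x : ℝ) (hx : x ∈ Set.Icc (3 : ℝ) ((n : ℝ) - 3))
    (hroot : ftilde n x = gtilde m x) :
    ((⌈x⌉ : ℤ) - 1) + (fFun n ((⌈x⌉ : ℤ) - 1).toNat : ℤ) ≤
      ((⌈x⌉ : ℤ) - 1) + gFun m ((⌈x⌉ : ℤ) - 1).toNat :=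
  G_ge_F_at_ceil_sub_one_general n m x hx hroot
end

section
/- For every integer n ≥ 2, the strong geodetic number of the hypercube Q_n satisfies sg(Q_n) ≥ ⌈2^((n+1)/2) / √(n-1)⌉, where 2^((n+1)/2) denotes the real power. -/
open SimpleGraph

/-- The hypercube graph `Qₙ` on vertex set `{0,1}ⁿ`; two vertices are adjacent iff
they differ in exactly one coordinate. -/
def hypercube (n : ℕ) : SimpleGraph (Fin n → Bool) :=
  SimpleGraph.fromRel fun x y => ∃ i, x i ≠ y i ∧ ∀ j, j ≠ i → x j = y j

/-!
Every vertex of `Qₙ` outside a strong geodetic set `S` is an inner vertex of one of the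
`(|S| choose 2)` fixed geodesics, and a geodesic of `Qₙ` has at most `n - 1` inner vertices since
the diameter is `n`. Hence `2ⁿ ≤ |S| + (|S| choose 2)(n - 1)`, which for `n ≥ 2` gives
`2ⁿ⁺¹ ≤ |S|²(n - 1)`; taking square roots yields the bound.
-/

open Finset

theorem Finset.card_univ_le_card_add_choose_two_mul {α : Type*} [Fintype α] [DecidableEq α]
    {S : Finset α} {I : Sym2 α → Finset α} {m : ℕ}
    (hI : ∀ u ∈ S, ∀ v ∈ S, u ≠ v → #(I s(u, v)) ≤ m)
    (hcover : ∀ x ∉ S, ∃ u ∈ S, ∃ v ∈ S, u ≠ v ∧ x ∈ I s(u, v)) :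
    Fintype.card α ≤ #S + (#S).choose 2 * m := by
  set P := S.offDiag.image Sym2.mk.uncurry
  have hsub : univ ⊆ S ∪ P.biUnion I := by
    intro x _
    by_cases hx : x ∈ S
    · exact mem_union_left _ hx
    obtain ⟨u, hu, v, hv, huv, hxI⟩ := hcover x hx
    have huvP : s(u, v) ∈ P := mem_image_of_mem _ (mem_offDiag.mpr ⟨hu, hv, huv⟩)
    exact mem_union_right _ (mem_biUnion.mpr ⟨s(u, v), huvP, hxI⟩)
  have hP : ∀ z ∈ P, #(I z) ≤ m := by
    simp only [P, mem_image, mem_offDiag, Prod.exists, Function.uncurry_apply_pair]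
    rintro _ ⟨u, v, ⟨hu, hv, huv⟩, rfl⟩
    exact hI u hu v hv huv
  calc Fintype.card α = #(univ : Finset α) := card_univ.symm
    _ ≤ #S + #(P.biUnion I) := (card_le_card hsub).trans (card_union_le _ _)
    _ ≤ #S + #P * m := by grw [card_biUnion_le_card_mul P I m hP]
    _ = #S + (#S).choose 2 * m := by rw [Sym2.card_image_offDiag]

namespace SimpleGraph

variable {V : Type*} {G : SimpleGraph V}

theorem Walk.card_support_toFinset_sdiff_le [DecidableEq V] {u v : V} (huv : u ≠ v)
    (w : G.Walk u v) : #(w.support.toFinset \ {u, v}) ≤ w.length - 1 := by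
  have hends : ({u, v} : Finset V) ⊆ w.support.toFinset := by
    simp [insert_subset_iff, w.start_mem_support, w.end_mem_support]
  have hsupp : #w.support.toFinset ≤ w.length + 1 :=
    (List.toFinset_card_le _).trans w.length_support.le
  rw [card_sdiff_of_subset hends, card_pair huv]
  omega

theorem isStrongGeodeticSet_univ (hG : G.Preconnected) : IsStrongGeodeticSet G Set.univ := by
  classical
  choose d hd using fun u v => (hG u v).exists_walk_length_eq_dist
  let _ : LinearOrder V := linearOrderOfSTO WellOrderingRel
  refine ⟨fun u _ v _ => if u ≤ v then d u v else (d v u).reverse, fun u _ v _ => ?_,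
    fun u _ v _ => ?_, fun x => ⟨x, trivial, x, trivial, by simp⟩⟩
  · dsimp only
    split_ifs
    · exact hd u v
    · simp [hd, dist_comm]
  · rcases lt_trichotomy u v with huv | rfl | huv
    · simp [huv.le, huv.not_ge]
    · have : (d u u).Nil := Walk.length_eq_zero_iff.mp (by simp [hd])
      simp [this.eq_nil]
    · simp [huv.le, huv.not_ge]

/-- `I s(u, v)` is the set of inner vertices of the geodesic fixed between `u` and `v`; the pair
being unordered uses the symmetry of the choice. -/
theorem IsStrongGeodeticSet.exists_inner [DecidableEq V] {S : Finset V}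
    (hS : IsStrongGeodeticSet G S) :
    ∃ I : Sym2 V → Finset V, (∀ u ∈ S, ∀ v ∈ S, u ≠ v → #(I s(u, v)) ≤ G.dist u v - 1) ∧
      ∀ x ∉ S, ∃ u ∈ S, ∃ v ∈ S, u ≠ v ∧ x ∈ I s(u, v) := by
  obtain ⟨γ, hlen, hsymm, hcover⟩ := hS
  let J : V → V → Finset V := fun u v =>
    if h : u ∈ S ∧ v ∈ S then (γ u h.1 v h.2).support.toFinset \ {u, v} else ∅
  have hJ : ∀ u v, J u v = J v u := by
    intro u v
    by_cases h : u ∈ S ∧ v ∈ S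
    · simp [J, h, hsymm u h.1 v h.2, pair_comm]
    · simp [J, h, and_comm]
  refine ⟨Sym2.lift ⟨J, hJ⟩, fun u hu v hv huv => ?_, fun x hx => ?_⟩
  · simpa [J, hu, hv, hlen] using Walk.card_support_toFinset_sdiff_le huv (γ u hu v hv)
  · obtain ⟨u, hu, v, hv, hxuv⟩ := hcover x
    have hxu : x ≠ u := by rintro rfl; exact hx hu
    have hxv : x ≠ v := by rintro rfl; exact hx hv
    have huv : u ≠ v := by
      rintro rfl
      have : (γ u hu u hv).Nil := Walk.length_eq_zero_iff.mp (by simp [hlen])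
      simp [Walk.nil_iff_support_eq.mp this] at hxuv
      exact hxu hxuv
    refine ⟨u, hu, v, hv, huv, ?_⟩
    simp [J, Finset.mem_coe.mp hu, Finset.mem_coe.mp hv, hxuv, hxu, hxv]

theorem IsStrongGeodeticSet.card_le [Fintype V] [DecidableEq V] {S : Finset V}
    (hS : IsStrongGeodeticSet G S) {D : ℕ} (hD : ∀ u v, G.dist u v ≤ D) :
    Fintype.card V ≤ #S + (#S).choose 2 * (D - 1) := by
  obtain ⟨I, hI, hcover⟩ := hS.exists_inner
  exact card_univ_le_card_add_choose_two_mul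
    (fun u hu v hv huv => (hI u hu v hv huv).trans (Nat.sub_le_sub_right (hD u v) 1)) hcover

theorem exists_isStrongGeodeticSet_card_eq [Fintype V] (hG : G.Preconnected) :
    ∃ S : Finset V, IsStrongGeodeticSet G S ∧ #S = strongGeodeticNumber G := by
  obtain ⟨S, hcard, hS⟩ :=
    Nat.sInf_mem (s := {k | ∃ S : Finset V, #S = k ∧ IsStrongGeodeticSet G S})
      ⟨_, univ, rfl, by simpa using isStrongGeodeticSet_univ hG⟩
  exact ⟨S, hS, hcard⟩

theorem card_le_strongGeodeticNumber_add [Fintype V] (hG : G.Preconnected) {D : ℕ}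
    (hD : ∀ u v, G.dist u v ≤ D) :
    Fintype.card V ≤ strongGeodeticNumber G + (strongGeodeticNumber G).choose 2 * (D - 1) := by
  classical
  obtain ⟨S, hS, hcard⟩ := exists_isStrongGeodeticSet_card_eq hG
  exact hcard ▸ hS.card_le hD

end SimpleGraph

theorem hypercube_adj_iff {n : ℕ} {x y : Fin n → Bool} :
    (hypercube n).Adj x y ↔ ∃ i, x i ≠ y i ∧ ∀ j, j ≠ i → x j = y j := by
  refine ⟨fun ⟨_, h⟩ => h.elim id ?_, fun h => ⟨?_, .inl h⟩⟩
  · exact fun ⟨i, hi, h⟩ => ⟨i, hi.symm, fun j hj => (h j hj).symm⟩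
  · rintro rfl
    obtain ⟨i, hi, -⟩ := h
    exact hi rfl

def hypercubeInterpolate {n : ℕ} (u v : Fin n → Bool) (k : ℕ) : Fin n → Bool :=
  fun i => if (i : ℕ) < k then v i else u i

theorem hypercubeInterpolate_succ_eq_or_adj {n : ℕ} (u v : Fin n → Bool) (k : ℕ) :
    hypercubeInterpolate u v k = hypercubeInterpolate u v (k + 1) ∨
      (hypercube n).Adj (hypercubeInterpolate u v k) (hypercubeInterpolate u v (k + 1)) := by
  have hval : ∀ i, hypercubeInterpolate u v k i ≠ hypercubeInterpolate u v (k + 1) i →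
      (i : ℕ) = k := by
    intro i hi
    by_contra hik
    have : (i : ℕ) < k ↔ (i : ℕ) < k + 1 := by omega
    simp [hypercubeInterpolate, this] at hi
  refine or_iff_not_imp_left.mpr fun hne => ?_
  obtain ⟨i, hi⟩ := Function.ne_iff.mp hne
  exact hypercube_adj_iff.mpr ⟨i, hi, fun j hj => by_contra fun h =>
    hj (Fin.ext ((hval j h).trans (hval i hi).symm))⟩

theorem hypercube_exists_walk_length_le {n : ℕ} (u v : Fin n → Bool) :
    ∃ w : (hypercube n).Walk u v, w.length ≤ n := by
  have hwalk : ∀ k, ∃ w : (hypercube n).Walk u (hypercubeInterpolate u v k), w.length ≤ k := by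
    intro k
    induction k with
    | zero => exact ⟨Walk.nil.copy rfl (funext fun i => by simp [hypercubeInterpolate]), by simp⟩
    | succ k ih =>
      obtain ⟨w, hw⟩ := ih
      rcases hypercubeInterpolate_succ_eq_or_adj u v k with heq | hadj
      · exact ⟨w.copy rfl heq, by simp; omega⟩
      · exact ⟨w.concat hadj, by simp; omega⟩
  obtain ⟨w, hw⟩ := hwalk n
  exact ⟨w.copy rfl (funext fun i => by simp [hypercubeInterpolate]), by simpa using hw⟩

theorem hypercube_preconnected (n : ℕ) : (hypercube n).Preconnected :=
  fun u v => ⟨(hypercube_exists_walk_length_le u v).choose⟩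

theorem hypercube_dist_le {n : ℕ} (u v : Fin n → Bool) : (hypercube n).dist u v ≤ n :=
  let ⟨w, hw⟩ := hypercube_exists_walk_length_le u v
  (dist_le w).trans hw

theorem two_pow_succ_le_sq_mul_of_le_add_choose_two_mul {n k : ℕ} (hn : 2 ≤ n)
    (h : 2 ^ n ≤ k + k.choose 2 * (n - 1)) : 2 ^ (n + 1) ≤ k ^ 2 * (n - 1) := by
  have htwo : 2 * k.choose 2 = k * (k - 1) := by
    rw [Nat.choose_two_right, Nat.mul_div_cancel' (Nat.even_mul_pred_self k).two_dvd]
  have hsq : k + k * (k - 1) = k ^ 2 := by cases k <;> simp; ring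
  obtain ⟨m, rfl⟩ : ∃ m, n = m + 2 := ⟨n - 2, by omega⟩
  rw [show m + 2 - 1 = m + 1 by omega] at h ⊢
  rcases m.eq_zero_or_pos with rfl | hm
  · have hk : 3 ≤ k := by
      by_contra! hk
      interval_cases k <;> simp_all
    norm_num
    nlinarith
  · calc 2 ^ (m + 2 + 1) = 2 * 2 ^ (m + 2) := by ring
      _ ≤ 2 * k + 2 * k.choose 2 * (m + 1) := by rw [mul_assoc]; omega
      _ ≤ k * (m + 1) + k * (k - 1) * (m + 1) := by rw [htwo, mul_comm 2 k]; gcongr; omega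
      _ = k ^ 2 * (m + 1) := by rw [← hsq]; ring

theorem Real.sqrt_div_sqrt_le_of_le_sq_mul {a b c : ℝ} (hc : 0 ≤ c) (h : a ≤ c ^ 2 * b) :
    √a / √b ≤ c := by
  refine div_le_of_le_mul₀ (Real.sqrt_nonneg b) hc ?_
  calc √a ≤ √(c ^ 2 * b) := Real.sqrt_le_sqrt h
    _ = c * √b := by rw [Real.sqrt_mul (sq_nonneg c), Real.sqrt_sq hc]

/-- Corollary 4.1: for `n ≥ 2`, `sg(Qₙ) ≥ ⌈2^((n+1)/2) / √(n-1)⌉`. -/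
theorem sg_hypercube_lower (n : ℕ) (hn : 2 ≤ n) :
    ⌈(2 : ℝ) ^ (((n : ℝ) + 1) / 2) / Real.sqrt ((n : ℝ) - 1)⌉ ≤
      (strongGeodeticNumber (hypercube n) : ℤ) := by
  set k := strongGeodeticNumber (hypercube n)
  have hcount : 2 ^ n ≤ k + k.choose 2 * (n - 1) := by
    simpa using card_le_strongGeodeticNumber_add (hypercube_preconnected n) hypercube_dist_le
  have hsq : (2 : ℝ) ^ (n + 1) ≤ (k : ℝ) ^ 2 * ((n : ℝ) - 1) := by
    have := two_pow_succ_le_sq_mul_of_le_add_choose_two_mul hn hcount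
    rw [← Nat.cast_one (R := ℝ), ← Nat.cast_sub (by omega)]
    exact_mod_cast this
  have hpow : (2 : ℝ) ^ (((n : ℝ) + 1) / 2) = √(2 ^ (n + 1)) := by
    rw [Real.sqrt_eq_rpow, ← Real.rpow_natCast, ← Real.rpow_mul zero_le_two]
    push_cast
    ring_nf
  rw [Int.ceil_le, hpow]
  exact_mod_cast Real.sqrt_div_sqrt_le_of_le_sq_mul k.cast_nonneg hsq
end

section
/- For all integers n and n_0 with n ≥ n_0 ≥ 4, the strong geodetic number of the hypercube Q_n satisfies sg(Q_n) ≤ 2^(n - n_0) + 2^(n_0 - 1) - (n_0 - 2)(n_0 - 3). -/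
open SimpleGraph

/-!
Fix a block `U` of `n₀` coordinates. Let `A` be the `2^(n - n₀)` vertices vanishing on `U`, and
let `B` be the indicator vertices of a family `𝓛` of orderings of subsets of `U` such that every
subset of `U` is the set of an initial segment of one of them. A vertex `z` is reached from its
projection `u ∈ A` by flipping its `U`-coordinates in the order of such a list `l`, and this walk
is the beginning of a geodesic from `u` to the indicator of `l`; so `A ∪ B` is a strong geodetic
set, once each pair of `A × B` is oriented from `A` to `B`.

A family of `2^(n₀-1) - (n₀-2)(n₀-3)` lists suffices. Fix `a ∈ U` and a cyclic order on the
other `r = n₀ - 1` coordinates, and take its `r` rotations (the first one whole, the others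
without their last element), the same rotations preceded by `a`, and one list `Y, a` for every
other subset `Y` of `U \ {a}`. The initial segments of the rotations are the `r(r-1)` proper
cyclic arcs, `∅` and the whole set, so at most `2^r - r(r-1) - 2 + 2r` lists are used.
-/

section StrongGeodetic

variable {V : Type*} {G : SimpleGraph V}

/-- The pairs not oriented by `P` are oriented by an arbitrary well-order. -/
theorem IsStrongGeodeticSet.of_oriented {S : Set V} (geo : ∀ u v : V, G.Walk u v)
    (hgeo : ∀ u ∈ S, ∀ v ∈ S, (geo u v).length = G.dist u v)
    (P : V → V → Prop) (hP : ∀ u v, P u v → P v u → u = v)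
    (hcover : ∀ x, ∃ u ∈ S, ∃ v ∈ S, P u v ∧ x ∈ (geo u v).support) :
    IsStrongGeodeticSet G S := by
  classical
  let _ : LinearOrder V := WellOrderingRel.isWellOrder.linearOrder
  let O : V → V → Prop := fun u v => P u v ∨ (¬ P v u ∧ u ≤ v)
  have hO : ∀ u v, u ≠ v → (O u v ↔ ¬ O v u) := by
    intro u v huv
    have := hP u v
    have := hP v u
    have := le_total u v
    have := le_antisymm_iff.not.mp huv
    simp only [O]
    tauto
  let γ : ∀ u v : V, G.Walk u v := fun u v => if O u v then geo u v else (geo v u).reverse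
  have hγ : ∀ u ∈ S, ∀ v ∈ S, (γ u v).length = G.dist u v := by
    intro u hu v hv
    by_cases h : O u v
    · simp only [γ, if_pos h, hgeo u hu v hv]
    · simp only [γ, if_neg h, Walk.length_reverse, hgeo v hv u hu, SimpleGraph.dist_comm]
  refine ⟨fun u _ v _ => γ u v, hγ, fun u hu v hv => ?_, fun x => ?_⟩
  · rcases eq_or_ne u v with rfl | huv
    · have hnil : γ u u = Walk.nil :=
        (Walk.length_eq_zero_iff.mp ((hγ u hu u hu).trans SimpleGraph.dist_self)).eq_nil
      simp only [hnil, Walk.reverse_nil]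
    · by_cases h : O u v
      · simp [γ, h, (hO u v huv).mp h]
      · simp [γ, h, (hO u v huv).not_left.mp h]
  · obtain ⟨u, hu, v, hv, huv, hx⟩ := hcover x
    exact ⟨u, hu, v, hv, by simpa [γ, O, huv] using hx⟩

end StrongGeodetic

section PrefixCover

open Finset

variable {α β : Type*} [DecidableEq α] [DecidableEq β]

/-- A list stands for the chain of its initial segments; `injOn` makes the list recoverable from
its underlying set, i.e. from the indicator vertex of the hypercube. -/
structure IsChainFamily (s : Finset α) (𝓡 : Finset (List α)) : Prop where
  nodup : ∀ l ∈ 𝓡, l.Nodup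
  subset : ∀ l ∈ 𝓡, l.toFinset ⊆ s
  injOn : Set.InjOn List.toFinset (𝓡 : Set (List α))

structure IsPrefixCover (U : Finset α) (𝓛 : Finset (List α)) : Prop
    extends IsChainFamily U 𝓛 where
  exists_take : ∀ Y ⊆ U, ∃ l ∈ 𝓛, ∃ k, (l.take k).toFinset = Y

def prefixSets (𝓡 : Finset (List α)) : Finset (Finset α) :=
  𝓡.biUnion fun l => (range (l.length + 1)).image fun k => (l.take k).toFinset

lemma mem_prefixSets {𝓡 : Finset (List α)} {Y : Finset α} :
    Y ∈ prefixSets 𝓡 ↔ ∃ l ∈ 𝓡, ∃ k, (l.take k).toFinset = Y := by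
  simp only [prefixSets, mem_biUnion, mem_image, mem_range]
  refine ⟨fun ⟨l, hl, k, _, hk⟩ => ⟨l, hl, k, hk⟩, fun ⟨l, hl, k, hk⟩ => ?_⟩
  exact ⟨l, hl, min k l.length, by omega, by rw [← List.take_eq_take_min, hk]⟩

lemma toFinset_mem_prefixSets {𝓡 : Finset (List α)} {l : List α} (hl : l ∈ 𝓡) :
    l.toFinset ∈ prefixSets 𝓡 :=
  mem_prefixSets.mpr ⟨l, hl, l.length, by rw [List.take_length]⟩

lemma IsChainFamily.prefixSets_subset_powerset {s : Finset α} {𝓡 : Finset (List α)}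
    (h : IsChainFamily s 𝓡) : prefixSets 𝓡 ⊆ s.powerset := by
  intro Y hY
  obtain ⟨l, hl, k, rfl⟩ := mem_prefixSets.mp hY
  exact mem_powerset.mpr fun x hx => h.subset l hl
    (List.mem_toFinset.mpr ((List.take_sublist k l).subset (List.mem_toFinset.mp hx)))

noncomputable def extendChains (s : Finset α) (a : α) (𝓡 : Finset (List α)) : Finset (List α) :=
  (s.powerset \ prefixSets 𝓡).image (fun Y => Y.toList ++ [a]) ∪ 𝓡 ∪ 𝓡.image (a :: ·)

lemma mem_extendChains {s : Finset α} {a : α} {𝓡 : Finset (List α)} {l : List α} :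
    l ∈ extendChains s a 𝓡 ↔
      (∃ Y ⊆ s, Y ∉ prefixSets 𝓡 ∧ Y.toList ++ [a] = l) ∨ l ∈ 𝓡 ∨ ∃ l' ∈ 𝓡, a :: l' = l := by
  simp [extendChains, and_assoc]

lemma card_extendChains_add_card_prefixSets_le {s : Finset α} {a : α} {𝓡 : Finset (List α)}
    (h : IsChainFamily s 𝓡) :
    (extendChains s a 𝓡).card + (prefixSets 𝓡).card ≤ 2 ^ s.card + 2 * 𝓡.card := by
  have h₁ := card_sdiff_add_card_eq_card h.prefixSets_subset_powerset
  have h₂ : (extendChains s a 𝓡).card ≤ (s.powerset \ prefixSets 𝓡).card + 𝓡.card + 𝓡.card :=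
    (card_union_le _ _).trans (add_le_add ((card_union_le _ _).trans
      (Nat.add_le_add_right card_image_le _)) card_image_le)
  rw [card_powerset] at h₁
  omega

lemma injOn_toFinset_extendChains {s : Finset α} {a : α} (ha : a ∉ s) {𝓡 : Finset (List α)}
    (h : IsChainFamily s 𝓡) :
    Set.InjOn List.toFinset (extendChains s a 𝓡 : Set (List α)) := by
  have haY : ∀ Y ⊆ s, a ∉ Y := fun Y hY haY => ha (hY haY)
  have ha𝓡 : ∀ l ∈ 𝓡, a ∉ l.toFinset := fun l hl => haY _ (h.subset l hl)
  intro l₁ h₁ l₂ h₂ heq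
  have hers := congrArg (·.erase a) heq
  have hmem := congrArg (a ∈ ·) heq
  rcases mem_extendChains.mp h₁ with ⟨Y₁, hY₁, hY₁P, rfl⟩ | hl₁ | ⟨l₁, hl₁, rfl⟩ <;>
    rcases mem_extendChains.mp h₂ with ⟨Y₂, hY₂, hY₂P, rfl⟩ | hl₂ | ⟨l₂, hl₂, rfl⟩ <;>
    simp only [List.toFinset_append, List.toFinset_cons, List.toFinset_nil, toList_toFinset,
      insert_empty, union_singleton, eq_iff_iff] at hers hmem
  · rw [erase_insert (haY Y₁ hY₁), erase_insert (haY Y₂ hY₂)] at hers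
    rw [hers]
  · simp [ha𝓡 l₂ hl₂] at hmem
  · rw [erase_insert (haY Y₁ hY₁), erase_insert (ha𝓡 l₂ hl₂)] at hers
    exact absurd (hers ▸ toFinset_mem_prefixSets hl₂) hY₁P
  · simp [ha𝓡 l₁ hl₁] at hmem
  · exact h.injOn hl₁ hl₂ heq
  · simp [ha𝓡 l₁ hl₁] at hmem
  · rw [erase_insert (ha𝓡 l₁ hl₁), erase_insert (haY Y₂ hY₂)] at hers
    exact absurd (hers ▸ toFinset_mem_prefixSets hl₁) hY₂P
  · simp [ha𝓡 l₂ hl₂] at hmem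
  · rw [erase_insert (ha𝓡 l₁ hl₁), erase_insert (ha𝓡 l₂ hl₂)] at hers
    rw [h.injOn hl₁ hl₂ hers]

lemma isChainFamily_extendChains {s : Finset α} {a : α} (ha : a ∉ s) {𝓡 : Finset (List α)}
    (h : IsChainFamily s 𝓡) : IsChainFamily (insert a s) (extendChains s a 𝓡) := by
  refine ⟨fun l hl => ?_, fun l hl => ?_, injOn_toFinset_extendChains ha h⟩
  · rcases mem_extendChains.mp hl with ⟨Y, hYs, -, rfl⟩ | hl | ⟨l, hl', rfl⟩
    · simpa [List.nodup_append] using ⟨Y.nodup_toList, fun haY => ha (hYs haY)⟩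
    · exact h.nodup l hl
    · exact List.nodup_cons.mpr
        ⟨fun hal => ha (h.subset l hl' (List.mem_toFinset.mpr hal)), h.nodup l hl'⟩
  · rcases mem_extendChains.mp hl with ⟨Y, hYs, -, rfl⟩ | hl | ⟨l, hl', rfl⟩
    · simpa using insert_subset_insert a hYs
    · exact (h.subset l hl).trans (subset_insert a s)
    · simpa using insert_subset_insert a (h.subset l hl')

lemma exists_take_extendChains {s : Finset α} {a : α} {𝓡 : Finset (List α)}
    {Y : Finset α} (hY : Y ⊆ insert a s) :
    ∃ l ∈ extendChains s a 𝓡, ∃ k, (l.take k).toFinset = Y := by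
  have hYs : Y.erase a ⊆ s := fun x hx => by
    obtain ⟨hxa, hxY⟩ := mem_erase.mp hx
    exact (mem_insert.mp (hY hxY)).resolve_left hxa
  by_cases hP : Y.erase a ∈ prefixSets 𝓡
  · obtain ⟨l, hl, k, hk⟩ := mem_prefixSets.mp hP
    by_cases haY : a ∈ Y
    · refine ⟨a :: l, mem_extendChains.mpr (Or.inr (Or.inr ⟨l, hl, rfl⟩)), k + 1, ?_⟩
      rw [List.take_succ_cons, List.toFinset_cons, hk, insert_erase haY]
    · refine ⟨l, mem_extendChains.mpr (Or.inr (Or.inl hl)), k, ?_⟩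
      rw [hk, erase_eq_of_notMem haY]
  · have hmem : (Y.erase a).toList ++ [a] ∈ extendChains s a 𝓡 :=
      mem_extendChains.mpr (Or.inl ⟨_, hYs, hP, rfl⟩)
    by_cases haY : a ∈ Y
    · refine ⟨_, hmem, (Y.erase a).card + 1, ?_⟩
      rw [List.take_of_length_le (by simp), List.toFinset_append, toList_toFinset]
      simp [insert_erase haY]
    · refine ⟨_, hmem, (Y.erase a).card, ?_⟩
      rw [List.take_left' (length_toList _), toList_toFinset, erase_eq_of_notMem haY]

theorem IsChainFamily.exists_isPrefixCover {s : Finset α} {a : α} (ha : a ∉ s)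
    {𝓡 : Finset (List α)} (h : IsChainFamily s 𝓡) :
    ∃ 𝓛, IsPrefixCover (insert a s) 𝓛 ∧ 𝓛.card + (prefixSets 𝓡).card ≤ 2 ^ s.card + 2 * 𝓡.card :=
  ⟨extendChains s a 𝓡, ⟨isChainFamily_extendChains ha h, fun _ hY => exists_take_extendChains hY⟩,
    card_extendChains_add_card_prefixSets_le h⟩

lemma List.toFinset_map_embedding (e : α ↪ β) (l : List α) :
    (l.map e).toFinset = l.toFinset.map e := by
  ext; simp

lemma IsChainFamily.map {s : Finset α} {𝓡 : Finset (List α)} (h : IsChainFamily s 𝓡)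
    (e : α ↪ β) : IsChainFamily (s.map e) (𝓡.image (List.map e)) := by
  refine ⟨fun l hl => ?_, fun l hl => ?_, fun l₁ hl₁ l₂ hl₂ heq => ?_⟩
  · obtain ⟨l, hl', rfl⟩ := mem_image.mp hl
    exact (h.nodup l hl').map e.injective
  · obtain ⟨l, hl', rfl⟩ := mem_image.mp hl
    rw [List.toFinset_map_embedding]
    exact map_subset_map.mpr (h.subset l hl')
  · obtain ⟨l₁, hl₁', rfl⟩ := mem_image.mp hl₁
    obtain ⟨l₂, hl₂', rfl⟩ := mem_image.mp hl₂
    rw [List.toFinset_map_embedding, List.toFinset_map_embedding, map_inj] at heq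
    rw [h.injOn hl₁' hl₂' heq]

lemma card_prefixSets_image_map (e : α ↪ β) (𝓡 : Finset (List α)) :
    (prefixSets (𝓡.image (List.map e))).card = (prefixSets 𝓡).card := by
  have : prefixSets (𝓡.image (List.map e)) = (prefixSets 𝓡).image (Finset.map e) := by
    ext Y
    simp only [mem_prefixSets, mem_image, exists_exists_and_eq_and, ← List.map_take,
      List.toFinset_map_embedding]
    aesop
  rw [this, card_image_of_injective _ (Finset.map_injective e)]

end PrefixCover

namespace ZMod

open Finset

variable {r : ℕ}

def arc (i : ZMod r) (k : ℕ) : List (ZMod r) := (List.range k).map fun t : ℕ => i + (t : ZMod r)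

lemma take_arc (i : ZMod r) (j k : ℕ) : (arc i k).take j = arc i (min j k) := by
  rw [arc, ← List.map_take, List.take_range, arc]

lemma nodup_arc (i : ZMod r) {k : ℕ} (hk : k ≤ r) : (arc i k).Nodup := by
  refine List.nodup_range.map_on fun t ht t' ht' h => ?_
  rw [List.mem_range] at ht ht'
  have := congrArg val (add_left_cancel h)
  rwa [val_natCast_of_lt (by omega), val_natCast_of_lt (by omega)] at this

lemma card_toFinset_arc (i : ZMod r) {k : ℕ} (hk : k ≤ r) : (arc i k).toFinset.card = k := by
  rw [List.toFinset_card_of_nodup (nodup_arc i hk), arc, List.length_map, List.length_range]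

variable [NeZero r]

lemma mem_arc {i x : ZMod r} {k : ℕ} (hk : k ≤ r) : x ∈ arc i k ↔ (x - i).val < k := by
  simp only [arc, List.mem_map, List.mem_range]
  constructor
  · rintro ⟨t, ht, rfl⟩
    rwa [add_sub_cancel_left, val_natCast_of_lt (by omega)]
  · exact fun h => ⟨_, h, by rw [natCast_zmod_val, add_sub_cancel]⟩

/-- `i + k` lies just outside the arc from `i`, but it would lie inside an arc of the same length
starting at any other point of it. -/
lemma eq_of_toFinset_arc_eq {i j : ZMod r} {k : ℕ} (hk : 0 < k) (hkr : k < r)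
    (h : (arc i k).toFinset = (arc j k).toFinset) : i = j := by
  have hmem : ∀ x, (x - i).val < k ↔ (x - j).val < k := fun x => by
    rw [← mem_arc hkr.le, ← mem_arc hkr.le, ← List.mem_toFinset, h, List.mem_toFinset]
  have hj : (j - i).val < k := (hmem j).mpr (by simpa using hk)
  have hout : ¬ (i + k - j).val < k := by
    rw [← hmem, add_sub_cancel_left, val_natCast_of_lt hkr]; exact lt_irrefl k
  have hval : (i + k - j).val = k - (j - i).val := by
    rw [show i + k - j = (k : ZMod r) - (j - i) by ring,
      val_sub (by rw [val_natCast_of_lt hkr]; omega), val_natCast_of_lt hkr]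
  have : (j - i).val = 0 := by omega
  exact (sub_eq_zero.mp ((val_eq_zero _).mp this)).symm

variable (r) in
def rotationChains : Finset (List (ZMod r)) :=
  univ.image fun i => arc i (if i = 0 then r else r - 1)

lemma isChainFamily_rotationChains : IsChainFamily univ (rotationChains r) := by
  refine ⟨fun l hl => ?_, fun l _ => subset_univ _, fun l₁ hl₁ l₂ hl₂ heq => ?_⟩
  · obtain ⟨i, -, rfl⟩ := mem_image.mp hl
    exact nodup_arc i (by split_ifs <;> omega)
  · obtain ⟨i, -, rfl⟩ := mem_image.mp hl₁
    obtain ⟨j, -, rfl⟩ := mem_image.mp hl₂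
    have hcard := congrArg Finset.card heq
    rw [card_toFinset_arc _ (by split_ifs <;> omega),
      card_toFinset_arc _ (by split_ifs <;> omega)] at hcard
    have hr := Nat.pos_of_neZero r
    by_cases hi : i = 0 <;> by_cases hj : j = 0
    · rw [hi, hj]
    · simp only [hi, hj, if_true, if_false] at hcard; omega
    · simp only [hi, hj, if_true, if_false] at hcard; omega
    · have h2 : 2 ≤ r := by
        have := val_lt i
        have := (val_eq_zero i).not.mpr hi
        omega
      simp only [hi, hj, if_false] at heq ⊢
      rw [eq_of_toFinset_arc_eq (by omega) (by omega) heq]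

lemma card_rotationChains_le : (rotationChains r).card ≤ r :=
  card_image_le.trans (by rw [card_univ, ZMod.card])

variable (r) in
def arcSets : Finset (Finset (ZMod r)) :=
  ((univ : Finset (ZMod r)) ×ˢ Icc 1 (r - 1)).image fun p => (arc p.1 p.2).toFinset

lemma card_arcSets : (arcSets r).card = r * (r - 1) := by
  have hcard : ∀ p ∈ (univ : Finset (ZMod r)) ×ˢ Icc 1 (r - 1),
      0 < p.2 ∧ p.2 < r ∧ (arc p.1 p.2).toFinset.card = p.2 := fun p hp => by
    simp only [mem_product, mem_Icc] at hp
    exact ⟨by omega, by omega, card_toFinset_arc _ (by omega)⟩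
  rw [arcSets, card_image_of_injOn, card_product, card_univ, ZMod.card, Nat.card_Icc,
    Nat.add_sub_cancel]
  intro p hp q hq hpq
  obtain ⟨hp0, hpr, hpcard⟩ := hcard p hp
  have hk : p.2 = q.2 := by rw [← hpcard, ← (hcard q hq).2.2]; exact congrArg Finset.card hpq
  have hpq' : (arc p.1 p.2).toFinset = (arc q.1 p.2).toFinset := by simpa only [hk] using hpq
  exact Prod.ext (eq_of_toFinset_arc_eq hp0 hpr hpq') hk

lemma card_pos_lt_of_mem_arcSets {Y : Finset (ZMod r)} (hY : Y ∈ arcSets r) :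
    0 < Y.card ∧ Y.card < r := by
  obtain ⟨⟨i, k⟩, hp, rfl⟩ := mem_image.mp hY
  simp only [mem_product, mem_Icc] at hp
  rw [card_toFinset_arc _ (by omega)]
  omega

lemma arcSets_subset_prefixSets : arcSets r ⊆ prefixSets (rotationChains r) := by
  intro Y hY
  obtain ⟨⟨i, k⟩, hp, rfl⟩ := mem_image.mp hY
  simp only [mem_product, mem_Icc] at hp
  refine mem_prefixSets.mpr ⟨_, mem_image_of_mem _ (mem_univ i), k, ?_⟩
  rw [take_arc, min_eq_left (by split_ifs <;> omega)]

lemma card_prefixSets_rotationChains :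
    r * (r - 1) + 2 ≤ (prefixSets (rotationChains r)).card := by
  have hchain : arc 0 r ∈ rotationChains r :=
    mem_image.mpr ⟨0, mem_univ _, by rw [if_pos rfl]⟩
  have hempty : ∅ ∈ prefixSets (rotationChains r) := mem_prefixSets.mpr ⟨_, hchain, 0, rfl⟩
  have huniv : univ ∈ prefixSets (rotationChains r) := by
    refine mem_prefixSets.mpr ⟨_, hchain, r, ?_⟩
    rw [take_arc, min_self]
    exact eq_univ_of_card _ (by rw [card_toFinset_arc _ le_rfl, ZMod.card])
  have huniv_notMem : univ ∉ arcSets r := fun h => by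
    simpa [ZMod.card] using (card_pos_lt_of_mem_arcSets h).2
  have hempty_notMem : ∅ ∉ insert univ (arcSets r) := by
    rw [mem_insert, not_or]
    refine ⟨fun h => ?_, fun h => by simpa using (card_pos_lt_of_mem_arcSets h).1⟩
    simpa [← h] using (univ_nonempty : (univ : Finset (ZMod r)).Nonempty)
  calc r * (r - 1) + 2 = (insert ∅ (insert univ (arcSets r))).card := by
        rw [card_insert_of_notMem hempty_notMem, card_insert_of_notMem huniv_notMem, card_arcSets]
    _ ≤ _ := card_le_card (insert_subset hempty (insert_subset huniv arcSets_subset_prefixSets))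

end ZMod

theorem exists_isPrefixCover {β : Type*} [Fintype β] [DecidableEq β] {r : ℕ} (hr : 0 < r)
    (hβ : r + 1 ≤ Fintype.card β) :
    ∃ U : Finset β, ∃ 𝓛, U.card = r + 1 ∧ IsPrefixCover U 𝓛 ∧
      (𝓛.card : ℤ) ≤ 2 ^ r - ((r : ℤ) - 1) * ((r : ℤ) - 2) := by
  have : NeZero r := ⟨hr.ne'⟩
  obtain ⟨E⟩ : Nonempty (Option (ZMod r) ↪ β) :=
    Function.Embedding.nonempty_of_card_le (by rwa [Fintype.card_option, ZMod.card])
  let e : ZMod r ↪ β := Function.Embedding.some.trans E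
  have ha : E none ∉ Finset.univ.map e := by simp [e]
  obtain ⟨𝓛, h𝓛, hcard⟩ := (ZMod.isChainFamily_rotationChains.map e).exists_isPrefixCover ha
  refine ⟨_, 𝓛, by rw [Finset.card_insert_of_notMem ha, Finset.card_map, Finset.card_univ,
    ZMod.card], h𝓛, ?_⟩
  rw [card_prefixSets_image_map, Finset.card_map, Finset.card_univ, ZMod.card] at hcard
  have h₁ : ((ZMod.rotationChains r).image (List.map e)).card ≤ r :=
    Finset.card_image_le.trans ZMod.card_rotationChains_le
  have h₂ := ZMod.card_prefixSets_rotationChains (r := r)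
  zify [hr] at hcard h₁ h₂
  linarith

namespace Hypercube

open Finset

variable {n : ℕ}

def flipCoord (x : Fin n → Bool) (i : Fin n) : Fin n → Bool := Function.update x i (!x i)

def flipList (x : Fin n → Bool) (L : List (Fin n)) : Fin n → Bool := L.foldl flipCoord x

@[simp] lemma flipList_nil (x : Fin n → Bool) : flipList x [] = x := rfl

@[simp] lemma flipList_cons (x : Fin n → Bool) (i : Fin n) (L : List (Fin n)) :
    flipList x (i :: L) = flipList (flipCoord x i) L := rfl

lemma flipList_append (x : Fin n → Bool) (L L' : List (Fin n)) :
    flipList x (L ++ L') = flipList (flipList x L) L' := List.foldl_append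

lemma flipList_apply {L : List (Fin n)} (hL : L.Nodup) (x : Fin n → Bool) (i : Fin n) :
    flipList x L i = if i ∈ L then !x i else x i := by
  induction L generalizing x with
  | nil => simp
  | cons a L ih =>
    obtain ⟨ha, hL⟩ := List.nodup_cons.mp hL
    rw [flipList_cons, ih hL]
    by_cases hia : i = a
    · subst hia
      simp [ha, flipCoord]
    · simp [flipCoord, hia]

lemma adj_iff {x y : Fin n → Bool} :
    (hypercube n).Adj x y ↔ ∃ i, y = flipCoord x i := by
  have hflip : ∀ x y : Fin n → Bool, ∀ i, x i ≠ y i → (∀ j, j ≠ i → x j = y j) →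
      y = flipCoord x i := by
    intro x y i hi hj
    funext j
    by_cases hji : j = i
    · subst hji; simp [flipCoord, Bool.eq_not_iff, Ne.symm hi]
    · simp [flipCoord, hji, hj j hji]
  rw [hypercube, fromRel_adj]
  constructor
  · rintro ⟨-, ⟨i, hi, hj⟩ | ⟨i, hi, hj⟩⟩
    · exact ⟨i, hflip x y i hi hj⟩
    · exact ⟨i, hflip x y i hi.symm fun j hji => (hj j hji).symm⟩
  · rintro ⟨i, rfl⟩
    have hi : x i ≠ flipCoord x i i := by simp [flipCoord]
    exact ⟨fun h => hi (congrFun h i),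
      Or.inl ⟨i, hi, fun j hji => by simp [flipCoord, hji]⟩⟩

lemma hammingDist_flipList {L : List (Fin n)} (hL : L.Nodup) (x : Fin n → Bool) :
    hammingDist x (flipList x L) = L.length := by
  rw [hammingDist, ← List.toFinset_card_of_nodup hL]
  congr 1
  ext i
  by_cases h : i ∈ L <;> simp [flipList_apply hL, h]

def diffList (x y : Fin n → Bool) : List (Fin n) := (univ.filter fun i => x i ≠ y i).sort

lemma nodup_diffList (x y : Fin n → Bool) : (diffList x y).Nodup := Finset.sort_nodup _ _

lemma flipList_diffList (x y : Fin n → Bool) : flipList x (diffList x y) = y := by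
  funext i
  rw [flipList_apply (nodup_diffList x y)]
  cases hx : x i <;> cases hy : y i <;> simp [diffList, hx, hy]

def walkAlong (x : Fin n → Bool) : (L : List (Fin n)) → (hypercube n).Walk x (flipList x L)
  | [] => Walk.nil
  | i :: L => Walk.cons (adj_iff.mpr ⟨i, rfl⟩) (walkAlong (flipCoord x i) L)

@[simp] lemma length_walkAlong (x : Fin n → Bool) (L : List (Fin n)) :
    (walkAlong x L).length = L.length := by
  induction L generalizing x with
  | nil => rfl
  | cons i L ih => simp [walkAlong, ih]

lemma flipList_take_mem_support_walkAlong (x : Fin n → Bool) (L : List (Fin n)) (k : ℕ) :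
    flipList x (L.take k) ∈ (walkAlong x L).support := by
  induction L generalizing x k with
  | nil => simp [walkAlong]
  | cons i L ih =>
    cases k with
    | zero => simp [walkAlong]
    | succ k => simpa [walkAlong] using Or.inr (ih (flipCoord x i) k)

lemma hammingDist_le_length {x y : Fin n → Bool} (p : (hypercube n).Walk x y) :
    hammingDist x y ≤ p.length := by
  induction p with
  | nil => simp
  | cons h p ih =>
    obtain ⟨i, rfl⟩ := adj_iff.mp h
    calc hammingDist _ _ ≤ hammingDist _ (flipCoord _ i) + hammingDist (flipCoord _ i) _ :=
          hammingDist_triangle _ _ _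
      _ ≤ 1 + p.length := by
          gcongr
          simpa using (hammingDist_flipList (List.nodup_singleton i) _).le
      _ = _ := by rw [Walk.length_cons, add_comm]

theorem dist_eq_hammingDist (x y : Fin n → Bool) : (hypercube n).dist x y = hammingDist x y := by
  have hxy := flipList_diffList x y
  let p := (walkAlong x (diffList x y)).copy rfl hxy
  have hp : p.length = hammingDist x y := by
    rw [Walk.length_copy, length_walkAlong, ← hammingDist_flipList (nodup_diffList x y) x, hxy]
  refine le_antisymm (hp ▸ dist_le p) ?_
  obtain ⟨q, hq⟩ := p.reachable.exists_walk_length_eq_dist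
  exact hq ▸ hammingDist_le_length q

lemma length_walkAlong_eq_dist {L : List (Fin n)} (hL : L.Nodup) (x : Fin n → Bool) :
    (walkAlong x L).length = (hypercube n).dist x (flipList x L) := by
  rw [dist_eq_hammingDist, hammingDist_flipList hL, length_walkAlong]

def walkVia (x y : Fin n → Bool) (L : List (Fin n)) : (hypercube n).Walk x y :=
  (walkAlong x (L ++ diffList (flipList x L) y)).copy rfl
    (by rw [flipList_append, flipList_diffList])

lemma length_walkVia {x y : Fin n → Bool} {L : List (Fin n)} (hL : L.Nodup)
    (hxy : ∀ i ∈ L, x i ≠ y i) : (walkVia x y L).length = (hypercube n).dist x y := by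
  have hdisj : ∀ i ∈ L, i ∉ diffList (flipList x L) y := by
    intro i hi
    simp [diffList, flipList_apply hL, hi, Bool.eq_not_iff, hxy i hi]
  have hnodup : (L ++ diffList (flipList x L) y).Nodup :=
    List.nodup_append.mpr ⟨hL, nodup_diffList _ _, fun i hi j hj hij => hdisj i hi (hij ▸ hj)⟩
  rw [walkVia, Walk.length_copy, length_walkAlong_eq_dist hnodup, flipList_append,
    flipList_diffList]

lemma flipList_take_mem_support_walkVia (x y : Fin n → Bool) (L : List (Fin n)) (k : ℕ) :
    flipList x (L.take k) ∈ (walkVia x y L).support := by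
  have hk : L.take k = (L ++ diffList (flipList x L) y).take (min k L.length) := by
    rcases le_total k L.length with h | h
    · rw [min_eq_left h, List.take_append_of_le_length h]
    · rw [min_eq_right h, List.take_append_length, List.take_of_length_le h]
  rw [walkVia, Walk.support_copy, hk]
  exact flipList_take_mem_support_walkAlong _ _ _

def zeroOn (U : Finset (Fin n)) : Finset (Fin n → Bool) := univ.filter fun x => ∀ i ∈ U, x i = false

def indicator (l : List (Fin n)) : Fin n → Bool := fun i => decide (i ∈ l)

noncomputable def chainOf (𝓛 : Finset (List (Fin n))) (v : Fin n → Bool) : List (Fin n) :=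
  if h : ∃ l ∈ 𝓛, indicator l = v then h.choose else []

lemma chainOf_indicator {𝓛 : Finset (List (Fin n))}
    (h𝓛 : Set.InjOn List.toFinset (𝓛 : Set (List (Fin n)))) {l : List (Fin n)} (hl : l ∈ 𝓛) : chainOf 𝓛 (indicator l) = l := by
  have h : ∃ l' ∈ 𝓛, indicator l' = indicator l := ⟨l, hl, rfl⟩
  obtain ⟨hl', hind⟩ := h.choose_spec
  rw [chainOf, dif_pos h]
  refine h𝓛 hl' hl (Finset.ext fun i => ?_)
  simpa [indicator] using congrFun hind i

lemma card_zeroOn_le (U : Finset (Fin n)) : (zeroOn U).card ≤ 2 ^ (n - U.card) := by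
  calc (zeroOn U).card ≤ Uᶜ.powerset.card := by
        refine card_le_card_of_injOn (fun x => univ.filter fun i => x i = true) ?_ ?_
        · intro x hx
          simp only [zeroOn, coe_filter, mem_univ, true_and, Set.mem_ofPred_eq] at hx
          rw [mem_coe, mem_powerset]
          intro i hi
          simp only [mem_filter, mem_univ, true_and] at hi
          exact mem_compl.mpr fun hiU => by simp [hx i hiU] at hi
        · intro x _ y _ hxy
          funext i
          simpa using congrArg (i ∈ ·) hxy
    _ = 2 ^ (n - U.card) := by rw [card_powerset, card_compl, Fintype.card_fin]

lemma eq_const_false_of_mem_zeroOn {U : Finset (Fin n)} {l : List (Fin n)}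
    (hl : l.toFinset ⊆ U) (h : indicator l ∈ zeroOn U) : indicator l = fun _ => false := by
  funext i
  simp only [zeroOn, mem_filter, mem_univ, true_and] at h
  by_cases hi : i ∈ l
  · exact h i (hl (List.mem_toFinset.mpr hi))
  · simp [indicator, hi]

theorem isStrongGeodeticSet_zeroOn_union {U : Finset (Fin n)} {𝓛 : Finset (List (Fin n))}
    (h : IsPrefixCover U 𝓛) :
    IsStrongGeodeticSet (hypercube n) ↑(zeroOn U ∪ 𝓛.image indicator) := by
  set A := zeroOn U
  set B := 𝓛.image indicator
  refine IsStrongGeodeticSet.of_oriented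
    (fun u v => walkVia u v (if u ∈ A ∧ v ∈ B then chainOf 𝓛 v else []))
    (fun u _ v _ => ?_) (fun u v => u ∈ A ∧ v ∈ B) ?_ (fun z => ?_)
  · split_ifs with huv
    · obtain ⟨hu, hv⟩ := huv
      obtain ⟨l, hl, rfl⟩ := mem_image.mp hv
      rw [chainOf_indicator h.injOn hl]
      refine length_walkVia (h.nodup l hl) fun i hi => ?_
      have hiU : i ∈ U := h.subset l hl (List.mem_toFinset.mpr hi)
      simp only [A, zeroOn, mem_filter, mem_univ, true_and] at hu
      simp [hu i hiU, indicator, hi]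
    · exact length_walkVia List.nodup_nil (by simp)
  · have hzero : ∀ v, v ∈ A → v ∈ B → v = fun _ => false := by
      intro v hvA hvB
      obtain ⟨l, hl, rfl⟩ := mem_image.mp hvB
      exact eq_const_false_of_mem_zeroOn (h.subset l hl) hvA
    rintro u v ⟨huA, hvB⟩ ⟨hvA, huB⟩
    rw [hzero u huA huB, hzero v hvA hvB]
  · let u : Fin n → Bool := fun i => z i && decide (i ∉ U)
    have huA : u ∈ A := by simp +contextual [A, zeroOn, u]
    obtain ⟨l, hl, k, hk⟩ := h.exists_take (U.filter fun i => z i = true) (filter_subset _ _)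
    have hvB : indicator l ∈ B := mem_image_of_mem _ hl
    have hz : flipList u (l.take k) = z := by
      funext i
      have hmem : i ∈ l.take k ↔ i ∈ U ∧ z i = true := by
        rw [← List.mem_toFinset, hk, mem_filter]
      simp only [flipList_apply ((h.nodup l hl).sublist (List.take_sublist _ _)), hmem]
      by_cases hi : i ∈ U <;> cases hzi : z i <;> simp [u, hi, hzi]
    refine ⟨u, mem_union_left _ huA, indicator l, mem_union_right _ hvB, ⟨huA, hvB⟩, ?_⟩
    simp only [if_pos (And.intro huA hvB), chainOf_indicator h.injOn hl]
    exact hz ▸ flipList_take_mem_support_walkVia _ _ _ _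

theorem strongGeodeticNumber_le {U : Finset (Fin n)} {𝓛 : Finset (List (Fin n))}
    (h : IsPrefixCover U 𝓛) :
    strongGeodeticNumber (hypercube n) ≤ 2 ^ (n - U.card) + 𝓛.card :=
  calc strongGeodeticNumber (hypercube n) ≤ (zeroOn U ∪ 𝓛.image indicator).card :=
        Nat.sInf_le ⟨_, rfl, isStrongGeodeticSet_zeroOn_union h⟩
    _ ≤ (zeroOn U).card + (𝓛.image indicator).card := card_union_le _ _
    _ ≤ 2 ^ (n - U.card) + 𝓛.card := add_le_add (card_zeroOn_le U) card_image_le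

end Hypercube

/-- Main step of Theorem 4.3: for `n ≥ n₀ ≥ 4`,
`sg(Qₙ) ≤ 2^(n - n₀) + 2^(n₀ - 1) - (n₀ - 2)(n₀ - 3)`. -/
theorem sg_hypercube_upper2_split (n n₀ : ℕ) (h4 : 4 ≤ n₀) (hn : n₀ ≤ n) :
    (strongGeodeticNumber (hypercube n) : ℤ) ≤
      2 ^ (n - n₀) + 2 ^ (n₀ - 1) - ((n₀ : ℤ) - 2) * ((n₀ : ℤ) - 3) := by
  obtain ⟨U, 𝓛, hU, h𝓛, hcard⟩ := exists_isPrefixCover (β := Fin n) (r := n₀ - 1)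
    (by omega) (by rw [Fintype.card_fin]; omega)
  have hsg := Hypercube.strongGeodeticNumber_le h𝓛
  rw [hU, Nat.sub_add_cancel (by omega : 1 ≤ n₀)] at hsg
  push_cast [Nat.cast_sub (by omega : 1 ≤ n₀)] at hcard
  zify at hsg
  linarith
end
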